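/- Let w be a bounded weight structure on a triangulated category C. Then w extends to a bounded weight structure w' on the idempotent completion C' of C, such that the canonical embedding C → C' is weight-exact, and the heart of w' is the idempotent completion of the heart of w. -/

import Mathlib

open CategoryTheory Category Limits Pretriangulated

/-- `X` is a retract of `Y`. -/
def IsRetract {C : Type*} [Category C] (X Y : C) : Prop :=
  ∃ (i : X ⟶ Y) (r : Y ⟶ X), i ≫ r = 𝟙 X

/-- A weight structure on a triangulated category `C`, given by the pair of classes
`le = C^{w≤0}` and `ge = C^{w≥0}` (Bondarko). -/
structure IsWeightStructure (C : Type*) [Category C] [HasZeroObject C] [HasShift C ℤ]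
    [Preadditive C] [∀ n : ℤ, (shiftFunctor C n).Additive] [Pretriangulated C]
    (le ge : Set C) : Prop where
  le_retract : ∀ ⦃X Y : C⦄, Y ∈ le → IsRetract X Y → X ∈ le
  ge_retract : ∀ ⦃X Y : C⦄, Y ∈ ge → IsRetract X Y → X ∈ ge
  le_shift : ∀ ⦃X : C⦄, X ∈ le → X⟦(1 : ℤ)⟧ ∈ le
  ge_shift : ∀ ⦃X : C⦄, X ∈ ge → X⟦(-1 : ℤ)⟧ ∈ ge
  orth : ∀ ⦃X Y : C⦄, X ∈ ge → Y ∈ le → ∀ f : X ⟶ Y⟦(1 : ℤ)⟧, f = 0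
  decomp : ∀ M : C, ∃ (A B : C) (_ : A ∈ le) (_ : B ∈ ge)
    (f : M ⟶ A) (g : A ⟶ B) (h : B ⟶ M⟦(1 : ℤ)⟧), Triangle.mk f g h ∈ distTriang C
variable {C : Type*} [Category C] [HasZeroObject C] [HasShift C ℤ]
  [Preadditive C] [∀ n : ℤ, (shiftFunctor C n).Additive] [Pretriangulated C]
variable {C' : Type*} [Category C'] [HasZeroObject C'] [HasShift C' ℤ]
  [Preadditive C'] [∀ n : ℤ, (shiftFunctor C' n).Additive] [Pretriangulated C']

/-!
Take for `C'^{w≤0}` and `C'^{w≥0}` the retracts of images of `C^{w≤0}` and `C^{w≥0}`.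
Retract-closure, shift-stability and orthogonality are inherited directly from `C`;
the content is the existence of weight decompositions. Let `Y` be a retract of `ι X` with `X` of
weights `≥ a`. If `a ≥ 1` there is nothing to do. Otherwise split `X` as `P → X → A` with `P` of
weights `≥ 1` and `A ∈ C^{w≤0}`. The fibre `F` of `Y → ι A` is a retract of the image of
`P ⊞ A⟦-1⟧`, whose weights are `≥ a + 1`, so by induction `F` has a decomposition `R → F → L`.
The cone `W` of `R → F → Y` receives no maps from `C'^{w≥1}` and is a retract of an image, hence
lies in `C'^{w≤0}`, and `R → Y → W` is the decomposition of `Y`. Arguing through orthogonality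
rather than the octahedron keeps everything within the axioms of a pretriangulated category.
-/

open ZeroObject

namespace IsRetract

variable {D : Type*} [Category D]

lemma refl (X : D) : IsRetract X X := ⟨𝟙 X, 𝟙 X, comp_id _⟩

lemma of_iso {X Y : D} (e : X ≅ Y) : IsRetract X Y := ⟨e.hom, e.inv, e.hom_inv_id⟩

lemma trans {X Y Z : D} (h₁ : IsRetract X Y) (h₂ : IsRetract Y Z) : IsRetract X Z := by
  obtain ⟨i₁, r₁, h₁⟩ := h₁
  obtain ⟨i₂, r₂, h₂⟩ := h₂
  exact ⟨i₁ ≫ i₂, r₂ ≫ r₁, by simp [reassoc_of% h₂, h₁]⟩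

lemma map {E : Type*} [Category E] (F : D ⥤ E) {X Y : D} (h : IsRetract X Y) :
    IsRetract (F.obj X) (F.obj Y) := by
  obtain ⟨i, r, hir⟩ := h
  exact ⟨F.map i, F.map r, by rw [← F.map_comp, hir, F.map_id]⟩

lemma biprod_of_sub_eq_comp [Preadditive D] [HasBinaryBiproducts D] {F X B : D} (σ : F ⟶ X)
    (π : X ⟶ F) (k : F ⟶ B) (j : B ⟶ F) (h : 𝟙 F - σ ≫ π = k ≫ j) : IsRetract F (X ⊞ B) :=
  ⟨biprod.lift σ k, biprod.desc π j, by rw [biprod.lift_desc, ← h, add_sub_cancel]⟩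

lemma hom_eq_zero [Preadditive D] {X X₀ Y Y₀ : D} (hX : IsRetract X X₀) (hY : IsRetract Y Y₀)
    (h : ∀ g : X₀ ⟶ Y₀, g = 0) (f : X ⟶ Y) : f = 0 := by
  obtain ⟨i, r, hir⟩ := hX
  obtain ⟨j, s, hjs⟩ := hY
  calc f = i ≫ (r ≫ f ≫ j) ≫ s := by simp [reassoc_of% hir, hjs]
    _ = 0 := by rw [h (r ≫ f ≫ j), zero_comp, comp_zero]

end IsRetract

lemma isRetract_zero {D : Type*} [Category D] [HasZeroObject D] [HasZeroMorphisms D] (X : D) :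
    IsRetract 0 X :=
  ⟨0, 0, (isZero_zero D).eq_of_src _ _⟩

lemma isRetract_obj₃_of_mor₁_comp_eq_zero {T : Triangle C} (hT : T ∈ distTriang C) {Y : C}
    {i : Y ⟶ T.obj₂} {r : T.obj₂ ⟶ Y} (hir : i ≫ r = 𝟙 Y) (hr : T.mor₁ ≫ r = 0) :
    IsRetract Y T.obj₃ := by
  obtain ⟨τ, hτ⟩ := Triangle.yoneda_exact₂ T hT r hr
  exact ⟨i ≫ T.mor₂, τ, by rw [assoc, ← hτ, hir]⟩

/-- The two completed morphisms of triangles compose to an endomorphism of `T` that is the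
identity on the first two objects, hence an isomorphism on the third. -/
lemma isRetract_obj₃_of_retract {T T' : Triangle C} (hT : T ∈ distTriang C)
    (hT' : T' ∈ distTriang C) {i₁ : T.obj₁ ⟶ T'.obj₁} {r₁ : T'.obj₁ ⟶ T.obj₁}
    {i₂ : T.obj₂ ⟶ T'.obj₂} {r₂ : T'.obj₂ ⟶ T.obj₂} (h₁ : i₁ ≫ r₁ = 𝟙 _) (h₂ : i₂ ≫ r₂ = 𝟙 _)
    (hi : T.mor₁ ≫ i₂ = i₁ ≫ T'.mor₁) (hr : T'.mor₁ ≫ r₂ = r₁ ≫ T.mor₁) :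
    IsRetract T.obj₃ T'.obj₃ := by
  obtain ⟨a, ha₂, ha₃⟩ := complete_distinguished_triangle_morphism T T' hT hT' i₁ i₂ hi
  obtain ⟨b, hb₂, hb₃⟩ := complete_distinguished_triangle_morphism T' T hT' hT r₁ r₂ hr
  have : IsIso (a ≫ b) :=
    isIso₃_of_isIso₁₂
      (Triangle.homMk _ _ i₁ i₂ a hi ha₂ ha₃ ≫ Triangle.homMk _ _ r₁ r₂ b hr hb₂ hb₃) hT hT
      (by simp only [comp_hom₁, Triangle.homMk_hom₁, h₁]; infer_instance)
      (by simp only [comp_hom₂, Triangle.homMk_hom₂, h₂]; infer_instance)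
  exact ⟨a, b ≫ inv (a ≫ b), by rw [← assoc, IsIso.hom_inv_id]⟩

/-- By `coyonedaSurjInj_mor₁_iff` this says that `Z` maps trivially to the cone of `c`;
unlike that condition, it is visibly stable under composition. -/
def CoyonedaSurjInj {D : Type*} [Category D] [Preadditive D] [HasShift D ℤ] (Z : D) {R Y : D}
    (c : R ⟶ Y) : Prop :=
  (∀ t : Z ⟶ Y, ∃ t', t = t' ≫ c) ∧ ∀ t : Z ⟶ R⟦(1 : ℤ)⟧, t ≫ c⟦(1 : ℤ)⟧' = 0 → t = 0

lemma CoyonedaSurjInj.comp {D : Type*} [Category D] [Preadditive D] [HasShift D ℤ]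
    {Z R F Y : D} {c₁ : R ⟶ F} {c₂ : F ⟶ Y} (h₁ : CoyonedaSurjInj Z c₁)
    (h₂ : CoyonedaSurjInj Z c₂) : CoyonedaSurjInj Z (c₁ ≫ c₂) := by
  refine ⟨fun t => ?_, fun t ht => h₁.2 t (h₂.2 _ ?_)⟩
  · obtain ⟨t₂, rfl⟩ := h₂.1 t
    obtain ⟨t₁, rfl⟩ := h₁.1 t₂
    exact ⟨t₁, assoc _ _ _⟩
  · rwa [assoc, ← Functor.map_comp]

lemma coyonedaSurjInj_mor₁_iff {T : Triangle C} (hT : T ∈ distTriang C) (Z : C) :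
    CoyonedaSurjInj Z T.mor₁ ↔ ∀ t : Z ⟶ T.obj₃, t = 0 := by
  refine ⟨fun ⟨hsurj, hinj⟩ t => ?_, fun h => ⟨fun t => ?_, fun t ht => ?_⟩⟩
  · have hv : t ≫ T.mor₃ = 0 :=
      hinj _ (by rw [assoc, comp_distTriang_mor_zero₃₁ _ hT, comp_zero])
    obtain ⟨s, rfl⟩ := Triangle.coyoneda_exact₃ T hT t hv
    obtain ⟨s', rfl⟩ := hsurj s
    rw [assoc, comp_distTriang_mor_zero₁₂ _ hT, comp_zero]
  · exact Triangle.coyoneda_exact₂ T hT t (h _)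
  · obtain ⟨s, rfl⟩ := Triangle.coyoneda_exact₁ T hT t ht
    rw [h s, zero_comp]

namespace IsWeightStructure

variable {le ge : Set C} (w : IsWeightStructure C le ge)
include w

lemma mem_ge_of_iso {X Y : C} (e : X ≅ Y) (h : Y ∈ ge) : X ∈ ge :=
  w.ge_retract h (IsRetract.of_iso e)

lemma shift_shift_mem_ge_iff {X : C} {i j k : ℤ} (h : i + j = k) :
    X⟦i⟧⟦j⟧ ∈ ge ↔ X⟦k⟧ ∈ ge :=
  ⟨w.mem_ge_of_iso ((shiftFunctorAdd' C i j k h).app X),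
    w.mem_ge_of_iso ((shiftFunctorAdd' C i j k h).app X).symm⟩

lemma shift_zero_mem_ge_iff {X : C} : X⟦(0 : ℤ)⟧ ∈ ge ↔ X ∈ ge :=
  ⟨w.mem_ge_of_iso ((shiftFunctorZero C ℤ).app X).symm,
    w.mem_ge_of_iso ((shiftFunctorZero C ℤ).app X)⟩

lemma shift_mem_ge_of_le {X : C} {m n : ℤ} (hmn : m ≤ n) (h : X⟦n⟧ ∈ ge) : X⟦m⟧ ∈ ge := by
  induction m, hmn using Int.leInductionDown with
  | base => exact h
  | pred k _ hk => exact (w.shift_shift_mem_ge_iff (by ring)).1 (w.ge_shift hk)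

lemma hom_eq_zero {X Y : C} (hX : X⟦(1 : ℤ)⟧ ∈ ge) (hY : Y ∈ le) (f : X ⟶ Y) : f = 0 := by
  rw [← (shiftFunctor C (1 : ℤ)).map_eq_zero_iff]
  exact w.orth hX hY _

lemma mem_ge_of_hom_eq_zero {X : C} (h : ∀ A ∈ le, ∀ f : X ⟶ A⟦(1 : ℤ)⟧, f = 0) : X ∈ ge := by
  obtain ⟨A, B, hA, hB, f, g, k, hT⟩ := w.decomp (X⟦(-1 : ℤ)⟧)
  let e : X⟦(-1 : ℤ)⟧⟦(1 : ℤ)⟧ ≅ X := (shiftFunctorCompIsoId C (-1) 1 (by omega)).app X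
  have hf : -f⟦(1 : ℤ)⟧' = 0 := by simpa using e.hom ≫= h A hA (e.inv ≫ (-f⟦(1 : ℤ)⟧'))
  obtain ⟨s, hs⟩ := Triangle.coyoneda_exact₃ _ (rot_of_distTriang _ hT) (𝟙 _)
    (by rw [id_comp]; exact hf)
  exact w.mem_ge_of_iso e.symm (w.ge_retract hB ⟨s, k, hs.symm⟩)

lemma mem_ge_of_distTriang {T : Triangle C} (hT : T ∈ distTriang C) (h₁ : T.obj₁ ∈ ge)
    (h₃ : T.obj₃ ∈ ge) : T.obj₂ ∈ ge :=
  w.mem_ge_of_hom_eq_zero fun A hA f => by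
    obtain ⟨g, rfl⟩ := Triangle.yoneda_exact₂ T hT f (w.orth h₁ hA _)
    rw [w.orth h₃ hA g, comp_zero]

lemma shift_mem_ge_of_distTriang {T : Triangle C} (hT : T ∈ distTriang C) (n : ℤ)
    (h₁ : T.obj₁⟦n⟧ ∈ ge) (h₃ : T.obj₃⟦n⟧ ∈ ge) : T.obj₂⟦n⟧ ∈ ge :=
  w.mem_ge_of_distTriang (T.shift_distinguished hT n) h₁ h₃

lemma shift_biprod_mem_ge {X Y : C} {n : ℤ} (hX : X⟦n⟧ ∈ ge) (hY : Y⟦n⟧ ∈ ge) :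
    (X ⊞ Y)⟦n⟧ ∈ ge :=
  w.shift_mem_ge_of_distTriang (binaryBiproductTriangle_distinguished X Y) n hX hY

lemma exists_distTriang_of_shift_mem_ge {X : C} {a : ℤ} (ha : a ≤ 0) (hX : X⟦a⟧ ∈ ge) :
    ∃ (P A : C) (f : P ⟶ X) (g : X ⟶ A) (h : A ⟶ P⟦(1 : ℤ)⟧),
      Triangle.mk f g h ∈ distTriang C ∧ P⟦(1 : ℤ)⟧ ∈ ge ∧ A ∈ le ∧ A⟦a⟧ ∈ ge := by
  obtain ⟨A, B, hA, hB, f, g, h, hT⟩ := w.decomp X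
  refine ⟨_, A, _, _, _, inv_rot_of_distTriang _ hT, ?_, hA, ?_⟩
  · exact (w.shift_shift_mem_ge_iff (by omega)).2 (w.shift_zero_mem_ge_iff.2 hB)
  · exact w.shift_mem_ge_of_distTriang hT a hX
      (w.shift_mem_ge_of_le ha (w.shift_zero_mem_ge_iff.2 hB))

end IsWeightStructure

section Image

variable {D D' : Type*} [Category D] [Category D']

def retractClosure (F : D ⥤ D') (S : Set D) : Set D' :=
  {Y | ∃ X, X ∈ S ∧ IsRetract Y (F.obj X)}

lemma map_hom_eq_zero [Preadditive D] [Preadditive D'] (F : D ⥤ D') [F.Full]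
    [F.PreservesZeroMorphisms] {X Y : D} (h : ∀ g : X ⟶ Y, g = 0) (f : F.obj X ⟶ F.obj Y) :
    f = 0 := by
  rw [← F.map_preimage f, h (F.preimage f), F.map_zero]

lemma isRetract_biprod_map [Preadditive D] [Preadditive D'] [HasBinaryBiproducts D]
    [HasBinaryBiproducts D'] (F : D ⥤ D') [F.Additive] (X Y : D) :
    IsRetract (F.obj X ⊞ F.obj Y) (F.obj (X ⊞ Y)) :=
  have := preservesBinaryBiproducts_of_preservesBiproducts F
  IsRetract.of_iso (F.mapBiprod X Y).symm

variable [HasShift D ℤ] [HasShift D' ℤ] (F : D ⥤ D') [F.CommShift ℤ]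

lemma isRetract_shift_map {Y : D'} {X : D} (n : ℤ) (h : IsRetract Y (F.obj X)) :
    IsRetract (Y⟦n⟧) (F.obj (X⟦n⟧)) :=
  (h.map (shiftFunctor D' n)).trans (IsRetract.of_iso ((F.commShiftIso n).app X).symm)

lemma shift_mem_retractClosure {S S' : Set D} {n : ℤ} (hS : ∀ X ∈ S, X⟦n⟧ ∈ S') {Y : D'}
    (hY : Y ∈ retractClosure F S) : Y⟦n⟧ ∈ retractClosure F S' := by
  obtain ⟨X, hX, hYX⟩ := hY
  exact ⟨X⟦n⟧, hS X hX, isRetract_shift_map F n hYX⟩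

end Image

/-- `{G | G⟦1⟧ ∈ ge}` is `C^{w≥1}`; rotating the triangle gives a weight decomposition of `Y`
in the sense of `IsWeightStructure.decomp`. -/
def HasWeightDecomposition (ι : C ⥤ C') (le ge : Set C) (Y : C') : Prop :=
  ∃ (R W : C') (c : R ⟶ Y) (u : Y ⟶ W) (v : W ⟶ R⟦(1 : ℤ)⟧),
    Triangle.mk c u v ∈ distTriang C' ∧
    R ∈ retractClosure ι {G | G⟦(1 : ℤ)⟧ ∈ ge} ∧ W ∈ retractClosure ι le

lemma exists_isRetract_map_obj₃ (ι : C ⥤ C') [ι.CommShift ℤ] [ι.IsTriangulated] [ι.Full]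
    {T : Triangle C'} (hT : T ∈ distTriang C') {G X : C}
    (hG : IsRetract T.obj₁ (ι.obj G)) (hX : IsRetract T.obj₂ (ι.obj X)) :
    ∃ K : C, IsRetract T.obj₃ (ι.obj K) := by
  obtain ⟨i₁, r₁, h₁⟩ := hG
  obtain ⟨i₂, r₂, h₂⟩ := hX
  obtain ⟨K, g, h, hK⟩ := distinguished_cocone_triangle (ι.preimage (r₁ ≫ T.mor₁ ≫ i₂))
  have hιK : Triangle.mk (ι.map (ι.preimage (r₁ ≫ T.mor₁ ≫ i₂))) (ι.map g)
      (ι.map h ≫ (ι.commShiftIso (1 : ℤ)).hom.app G) ∈ distTriang C' :=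
    ι.map_distinguished _ hK
  have hi : T.mor₁ ≫ i₂ = i₁ ≫ ι.map (ι.preimage (r₁ ≫ T.mor₁ ≫ i₂)) := by
    rw [ι.map_preimage, reassoc_of% h₁]
  have hr : ι.map (ι.preimage (r₁ ≫ T.mor₁ ≫ i₂)) ≫ r₂ = r₁ ≫ T.mor₁ := by
    rw [ι.map_preimage, assoc, assoc, h₂, comp_id]
  exact ⟨K, isRetract_obj₃_of_retract hT hιK h₁ h₂ hi hr⟩

namespace IsWeightStructure

variable {le ge : Set C} (w : IsWeightStructure C le ge)
include w

lemma hasWeightDecomposition_of_one_le {ι : C ⥤ C'} {a : ℤ} (ha : 1 ≤ a) {X : C}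
    (hX : X⟦a⟧ ∈ ge) {Y : C'} (hYX : IsRetract Y (ι.obj X)) :
    HasWeightDecomposition ι le ge Y := by
  obtain ⟨A, -, hA, -⟩ := w.decomp X
  exact ⟨Y, 0, 𝟙 Y, 0, 0, contractible_distinguished Y, ⟨X, w.shift_mem_ge_of_le ha hX, hYX⟩,
    ⟨A, hA, isRetract_zero _⟩⟩

variable (ι : C ⥤ C') [ι.CommShift ℤ] [ι.IsTriangulated]

lemma exists_mem_le_isRetract {K : C} {Y : C'} (hYK : IsRetract Y (ι.obj K))
    (hY : ∀ G : C, G⟦(1 : ℤ)⟧ ∈ ge → ∀ t : ι.obj G ⟶ Y, t = 0) :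
    ∃ A, A ∈ le ∧ (K ∈ ge → A ∈ ge) ∧ IsRetract Y (ι.obj A) := by
  obtain ⟨A, B, hA, hB, f, g, h, hT⟩ := w.decomp K
  obtain ⟨i, r, hir⟩ := hYK
  refine ⟨A, hA, fun hK => w.mem_ge_of_distTriang hT hK hB,
    isRetract_obj₃_of_mor₁_comp_eq_zero (ι.map_distinguished _ (inv_rot_of_distTriang _ hT)) hir
      (hY _ ?_ _)⟩
  exact (w.shift_shift_mem_ge_iff (by omega)).2 (w.shift_zero_mem_ge_iff.2 hB)

variable [ι.Full]

lemma hom_eq_zero_of_mem_retractClosure {Z L : C'}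
    (hZ : Z ∈ retractClosure ι {G | G⟦(1 : ℤ)⟧ ∈ ge}) (hL : L ∈ retractClosure ι le)
    (f : Z ⟶ L) : f = 0 := by
  obtain ⟨G, hG, hZG⟩ := hZ
  obtain ⟨Q, hQ, hLQ⟩ := hL
  exact hZG.hom_eq_zero hLQ (map_hom_eq_zero ι (w.hom_eq_zero hG hQ)) f

/-- `Hom(P, A) = 0` makes the idempotent of `ι X` compatible with `ι P → ι X → ι A`, which gives
maps `σ`, `π` between `F` and `ι P` with `1 - σ ≫ π` factoring through `(ι A)⟦-1⟧`. -/
lemma exists_distTriang_isRetract_fibre {a : ℤ} (ha : a ≤ 0) {X : C} (hX : X⟦a⟧ ∈ ge) {Y : C'}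
    (hYX : IsRetract Y (ι.obj X)) :
    ∃ (F : C') (p : F ⟶ Y) (A : C) (q : Y ⟶ ι.obj A) (δ : ι.obj A ⟶ F⟦(1 : ℤ)⟧),
      Triangle.mk p q δ ∈ distTriang C' ∧ A ∈ le ∧
      ∃ S : C, S⟦a + 1⟧ ∈ ge ∧ IsRetract F (ι.obj S) := by
  obtain ⟨xi, xr, hx⟩ := hYX
  obtain ⟨P, A, f, g, h, hT, hP, hA, hAa⟩ := w.exists_distTriang_of_shift_mem_ge ha hX
  have hιT : Triangle.mk (ι.map f) (ι.map g) (ι.map h ≫ (ι.commShiftIso (1 : ℤ)).hom.app P) ∈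
      distTriang C' :=
    ι.map_distinguished _ hT
  obtain ⟨F, p, δ, hTF⟩ := distinguished_cocone_triangle₁ (xi ≫ ι.map g)
  obtain ⟨σ, hσ, -⟩ : ∃ σ : F ⟶ ι.obj P, p ≫ xi = σ ≫ ι.map f ∧ _ :=
    complete_distinguished_triangle_morphism₁ _ _ hTF hιT xi (𝟙 _) (comp_id _)
  obtain ⟨e, he⟩ : ∃ e : ι.obj A ⟶ ι.obj A, xr ≫ xi ≫ ι.map g = ι.map g ≫ e :=
    Triangle.yoneda_exact₂ _ hιT (xr ≫ xi ≫ ι.map g)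
    (map_hom_eq_zero ι (w.hom_eq_zero hP hA) _)
  obtain ⟨π, hπ, -⟩ : ∃ π : ι.obj P ⟶ F, ι.map f ≫ xr = π ≫ p ∧ _ :=
    complete_distinguished_triangle_morphism₁ _ _ hιT hTF xr e he.symm
  have hσπ : (𝟙 F - σ ≫ π) ≫ p = 0 := by
    rw [Preadditive.sub_comp, id_comp, assoc, ← hπ, ← reassoc_of% hσ, hx, comp_id, sub_self]
  obtain ⟨k, hk⟩ := Triangle.coyoneda_exact₂ _ (inv_rot_of_distTriang _ hTF) _ hσπ
  refine ⟨F, p, A, _, δ, hTF, hA, P ⊞ A⟦(-1 : ℤ)⟧, ?_, ?_⟩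
  · exact w.shift_biprod_mem_ge (w.shift_mem_ge_of_le (by omega) hP)
      ((w.shift_shift_mem_ge_iff (by omega)).2 hAa)
  · exact (IsRetract.biprod_of_sub_eq_comp (B := (ι.obj A)⟦(-1 : ℤ)⟧) σ π k _ hk).trans
      ((IsRetract.of_iso (biprod.mapIso (Iso.refl _) ((ι.commShiftIso (-1 : ℤ)).app A).symm)).trans
        (isRetract_biprod_map ι _ _))

lemma hasWeightDecomposition_of_distTriang {F Y E : C'} {p : F ⟶ Y} {q : Y ⟶ E}
    {δ : E ⟶ F⟦(1 : ℤ)⟧} (hT : Triangle.mk p q δ ∈ distTriang C')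
    (hE : E ∈ retractClosure ι le) (hF : HasWeightDecomposition ι le ge F) {X : C}
    (hYX : IsRetract Y (ι.obj X)) : HasWeightDecomposition ι le ge Y := by
  obtain ⟨R, L, m, _, _, hTF, hR, hL⟩ := hF
  obtain ⟨W, u, v, hTW⟩ := distinguished_cocone_triangle (m ≫ p)
  refine ⟨R, W, m ≫ p, u, v, hTW, hR, ?_⟩
  have hc : ∀ Z ∈ retractClosure ι {G | G⟦(1 : ℤ)⟧ ∈ ge}, CoyonedaSurjInj Z (m ≫ p) :=
    fun Z hZ =>
      ((coyonedaSurjInj_mor₁_iff hTF Z).2 (w.hom_eq_zero_of_mem_retractClosure ι hZ hL)).comp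
        ((coyonedaSurjInj_mor₁_iff hT Z).2 (w.hom_eq_zero_of_mem_retractClosure ι hZ hE))
  obtain ⟨G, -, hRG⟩ := hR
  obtain ⟨K, hWK⟩ := exists_isRetract_map_obj₃ ι hTW hRG hYX
  obtain ⟨A, hA, -, hWA⟩ := w.exists_mem_le_isRetract ι hWK fun G hG =>
    (coyonedaSurjInj_mor₁_iff hTW _).1 (hc _ ⟨G, hG, IsRetract.refl _⟩)
  exact ⟨A, hA, hWA⟩

lemma hasWeightDecomposition_of_isRetract (n : ℕ) {a : ℤ} (hn : 1 ≤ a + n) {X : C}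
    (hX : X⟦a⟧ ∈ ge) {Y : C'} (hYX : IsRetract Y (ι.obj X)) :
    HasWeightDecomposition ι le ge Y := by
  induction n generalizing a X Y with
  | zero => exact w.hasWeightDecomposition_of_one_le (by omega) hX hYX
  | succ n ih =>
    by_cases ha : 1 ≤ a
    · exact w.hasWeightDecomposition_of_one_le ha hX hYX
    obtain ⟨F, p, A, q, δ, hT, hA, S, hS, hFS⟩ :=
      w.exists_distTriang_isRetract_fibre ι (by omega) hX hYX
    exact w.hasWeightDecomposition_of_distTriang ι hT ⟨A, hA, IsRetract.refl _⟩
      (ih (by omega) hS hFS) hYX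

lemma isWeightStructure_retractClosure (h : ∀ Y : C', HasWeightDecomposition ι le ge Y) :
    IsWeightStructure C' (retractClosure ι le) (retractClosure ι ge) where
  le_retract := fun _ _ ⟨Q, hQ, hYQ⟩ hXY => ⟨Q, hQ, hXY.trans hYQ⟩
  ge_retract := fun _ _ ⟨G, hG, hYG⟩ hXY => ⟨G, hG, hXY.trans hYG⟩
  le_shift := fun _ => shift_mem_retractClosure ι fun _ hQ => w.le_shift hQ
  ge_shift := fun _ => shift_mem_retractClosure ι fun _ hG => w.ge_shift hG
  orth := fun _ _ ⟨G, hG, hXG⟩ ⟨Q, hQ, hYQ⟩ =>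
    hXG.hom_eq_zero (isRetract_shift_map ι 1 hYQ) (map_hom_eq_zero ι (w.orth hG hQ))
  decomp := fun M => by
    obtain ⟨R, W, c, u, v, hT, hR, hW⟩ := h M
    exact ⟨W, R⟦(1 : ℤ)⟧, hW, shift_mem_retractClosure ι (fun _ hG => hG) hR, u, v, _,
      rot_of_distTriang _ hT⟩

lemma retractClosure_inter :
    retractClosure ι le ∩ retractClosure ι ge = retractClosure ι (le ∩ ge) := by
  ext Y
  refine ⟨fun ⟨hYle, G, hG, hYG⟩ => ?_,
    fun ⟨X, ⟨hle, hge⟩, hYX⟩ => ⟨⟨X, hle, hYX⟩, X, hge, hYX⟩⟩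
  obtain ⟨A, hA, hAge, hYA⟩ := w.exists_mem_le_isRetract ι hYG fun G' hG' =>
    w.hom_eq_zero_of_mem_retractClosure ι ⟨G', hG', IsRetract.refl _⟩ hYle
  exact ⟨A, ⟨hA, hAge hG⟩, hYA⟩

end IsWeightStructure

theorem weightStructure_extends_to_idempotent_completion_general
    (le ge : Set C) (w : IsWeightStructure C le ge)
    (hbdd : ∀ M : C, (∃ i : ℤ, M⟦i⟧ ∈ le) ∧ (∃ j : ℤ, M⟦j⟧ ∈ ge))
    (ι : C ⥤ C') [ι.CommShift ℤ] [ι.IsTriangulated] [ι.Full]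
    (hdense : ∀ Y : C', ∃ X : C, IsRetract Y (ι.obj X)) :
    ∃ le' ge' : Set C', IsWeightStructure C' le' ge' ∧
      (∀ M : C', (∃ i : ℤ, M⟦i⟧ ∈ le') ∧ (∃ j : ℤ, M⟦j⟧ ∈ ge')) ∧
      (∀ X ∈ le, ι.obj X ∈ le') ∧ (∀ X ∈ ge, ι.obj X ∈ ge') ∧
      le' ∩ ge' = {Y : C' | ∃ X : C, X ∈ le ∩ ge ∧ IsRetract Y (ι.obj X)} := by
  have hdecomp : ∀ Y : C', HasWeightDecomposition ι le ge Y := fun Y => by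
    obtain ⟨X, hYX⟩ := hdense Y
    obtain ⟨a, ha⟩ := (hbdd X).2
    exact w.hasWeightDecomposition_of_isRetract ι (1 - a).toNat (by omega) ha hYX
  refine ⟨retractClosure ι le, retractClosure ι ge, w.isWeightStructure_retractClosure ι hdecomp,
    fun M => ?_, fun X hX => ⟨X, hX, IsRetract.refl _⟩, fun X hX => ⟨X, hX, IsRetract.refl _⟩,
    w.retractClosure_inter ι⟩
  obtain ⟨X, hMX⟩ := hdense M
  obtain ⟨⟨i, hi⟩, j, hj⟩ := hbdd X
  exact ⟨⟨i, X⟦i⟧, hi, isRetract_shift_map ι i hMX⟩, j, X⟦j⟧, hj, isRetract_shift_map ι j hMX⟩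

/-- Let `w` be a bounded weight structure on `C`, and let `ι : C ⥤ C'` realize the
idempotent completion of `C` as a triangulated category (`C'` is idempotent complete,
`ι` is exact and fully faithful, and every object of `C'` is a retract of an object
coming from `C`). Then `w` extends to a bounded weight structure `w'` on `C'` such
that `ι` is weight-exact, and the heart of `w'` is the idempotent completion
(retract-closure) of the heart of `w`. -/
theorem weightStructure_extends_to_idempotent_completion
    (le ge : Set C) (w : IsWeightStructure C le ge)
    (hbdd : ∀ M : C, (∃ i : ℤ, M⟦i⟧ ∈ le) ∧ (∃ j : ℤ, M⟦j⟧ ∈ ge))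
    [IsIdempotentComplete C']
    (ι : C ⥤ C') [ι.CommShift ℤ] [ι.IsTriangulated] [ι.Full] [ι.Faithful]
    (hdense : ∀ Y : C', ∃ X : C, IsRetract Y (ι.obj X)) :
    ∃ le' ge' : Set C', IsWeightStructure C' le' ge' ∧
      (∀ M : C', (∃ i : ℤ, M⟦i⟧ ∈ le') ∧ (∃ j : ℤ, M⟦j⟧ ∈ ge')) ∧
      (∀ X ∈ le, ι.obj X ∈ le') ∧ (∀ X ∈ ge, ι.obj X ∈ ge') ∧
      le' ∩ ge' = {Y : C' | ∃ X : C, X ∈ le ∩ ge ∧ IsRetract Y (ι.obj X)} :=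
  weightStructure_extends_to_idempotent_completion_general le ge w hbdd ι hdense
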